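/- In the Minsky-machine decrement gadget (upper branch), if 0 < v₁, v₂ < v₁ ≤ p (naturals), then the delay sequence p−v₁, 1, v₁−v₂−1, v₂ with appropriate resets transforms (x₁ ↦ v₁, x₂ ↦ v₂, z ↦ 0) into (x₁ ↦ v₁−1, x₂ ↦ v₂, z ↦ 0), and the intermediate guards hold: x₁ = p after the first delay; x₁ = 1 after the second; x₂ = p after the third (i.e., v₂+(p−v₁)+1+(v₁−v₂−1) = p); z = p after the fourth (i.e., (p−v₁)+1+(v₁−v₂−1)+v₂ = p). -/
import Mathlib


inductive Clk | x1 | x2 | z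
deriving DecidableEq

def delay (ν : Clk → ℝ) (d : ℝ) : Clk → ℝ := fun c => ν c + d

def reset (ν : Clk → ℝ) (c0 : Clk) : Clk → ℝ := fun c => if c = c0 then 0 else ν c

/-- Decrement gadget, upper branch (`0 < v₁`, `v₂ < v₁ ≤ p`): the delay sequence
`p−v₁, 1, v₁−v₂−1, v₂` with the prescribed resets passes all guards and
transforms `(v₁, v₂, 0)` into `(v₁−1, v₂, 0)`. -/
theorem decrement_gadget_upper (v1 v2 p : ℕ) (h0 : 0 < v1) (h21 : v2 < v1)
    (h1p : v1 ≤ p)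
    (ν0 : Clk → ℝ) (hx1 : ν0 .x1 = v1) (hx2 : ν0 .x2 = v2) (hz : ν0 .z = 0) :
    let a1 := delay ν0 ((p : ℝ) - v1)
    let b1 := reset a1 .x1
    let a2 := delay b1 1
    let b2 := reset a2 .x1
    let a3 := delay b2 ((v1 : ℝ) - v2 - 1)
    let b3 := reset a3 .x2
    let a4 := delay b3 (v2 : ℝ)
    let bf := reset a4 .z
    a1 .x1 = p ∧ a2 .x1 = 1 ∧ a3 .x2 = p ∧ a4 .z = p ∧
    bf .x1 = (v1 : ℝ) - 1 ∧ bf .x2 = v2 ∧ bf .z = 0 := by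
  refine ⟨?_, ?_, ?_, ?_, ?_, ?_, ?_⟩ <;>
    simp [delay, reset, hx1, hx2, hz] <;> ring
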